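/- On the addition-free theta-term system T, the linear order < extends the partial tree-order ⊴: if α ⊴ β then α ≤ β. -/

import Mathlib

/-- Addition-free theta terms. -/
inductive TTerm : Type
  | zero : TTerm
  | theta : ℕ → TTerm → TTerm
  deriving DecidableEq

namespace TTerm

/-- `S 0 = -1`, `S (ϑ_i α) = i`. -/
def S : TTerm → ℤ
  | zero => -1
  | theta i _ => i

/-- Membership in the term system `T`: `ϑ_i α` is formed only when `S α ≤ i + 1`. -/
inductive WF : TTerm → Prop
  | zero : WF zero
  | theta {i : ℕ} {a : TTerm} : WF a → S a ≤ (i : ℤ) + 1 → WF (theta i a)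

/-- Coefficients `k_i`. -/
def k (i : ℕ) : TTerm → TTerm
  | zero => zero
  | theta j b => if j ≤ i then theta j b else k i b

mutual
/-- The linear order on theta terms. -/
inductive Lt : TTerm → TTerm → Prop
  | zero {a : TTerm} : a ≠ zero → Lt zero a
  | idx {i j : ℕ} {a b : TTerm} : i < j → Lt (theta i a) (theta j b)
  | left {i : ℕ} {a b : TTerm} : Lt a b → Lt (k i a) (theta i b) →
      Lt (theta i a) (theta i b)
  | right {i : ℕ} {a b : TTerm} : Lt b a → Le (theta i a) (k i b) →
      Lt (theta i a) (theta i b)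

inductive Le : TTerm → TTerm → Prop
  | refl {a : TTerm} : Le a a
  | of_lt {a b : TTerm} : Lt a b → Le a b
end

end TTerm

/-- The tree-ordering `⊴` on theta terms. -/
inductive TTerm.Sub : TTerm → TTerm → Prop
  | zero {a : TTerm} : TTerm.Sub TTerm.zero a
  | coeff {i : ℕ} {a b : TTerm} : TTerm.Sub a (TTerm.k i b) → TTerm.Sub a (TTerm.theta i b)
  | mono {i : ℕ} {a b : TTerm} : TTerm.Sub a b → TTerm.Sub (TTerm.theta i a) (TTerm.theta i b)

/-!
Everything rests on the claim `k_i x ⊴ k_i b → k_i x < ϑ_i b`. Going down the spine of `x` to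
`k_i x = ϑ_i y`, trichotomy of `y` and `b` leaves two cases: for `y < b` one needs
`k_i y < ϑ_i b`, which is the claim again for `y`, because `k_i y ⊴ ϑ_i y ⊴ k_i b`; for `y > b`
one needs `ϑ_i y ≤ k_i b`, which is the theorem for the smaller right-hand side `k_i b`
(`y = b` is excluded by size). Conversely, the theorem for `ϑ_i b` reduces to the claim: `⊴`
does not increase `S`, so `a ⊴ k_i b` forces `k_i a = a`, and `a ⊴ b` gives `k_i a ⊴ k_i b`.
-/

namespace TTerm

theorem theta_ne_zero {i : ℕ} {a : TTerm} : theta i a ≠ zero := nofun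

def size : TTerm → ℕ
  | zero => 0
  | theta _ a => size a + 1

theorem size_k_le (i : ℕ) : ∀ b : TTerm, size (k i b) ≤ size b
  | zero => le_rfl
  | theta j b => by
    unfold k
    split
    · exact le_rfl
    · exact (size_k_le i b).trans (Nat.le_succ _)

theorem neg_one_le_S : ∀ a : TTerm, -1 ≤ S a
  | zero => le_rfl
  | theta i _ => by simp only [S]; omega

theorem S_k_le (i : ℕ) : ∀ b : TTerm, S (k i b) ≤ i
  | zero => by simp [S, k]
  | theta j b => by
    unfold k
    split
    · simpa [S]
    · exact S_k_le i b

theorem k_of_S_le {i : ℕ} : ∀ {a : TTerm}, S a ≤ i → k i a = a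
  | zero, _ => rfl
  | theta j _, h => by simp_all [S, k]

theorem k_k_of_le {i j : ℕ} (hji : j ≤ i) (b : TTerm) : k i (k j b) = k j b :=
  k_of_S_le ((S_k_le j b).trans (by exact_mod_cast hji))

theorem k_k_of_ge {i j : ℕ} (hij : i ≤ j) : ∀ b : TTerm, k i (k j b) = k i b
  | zero => rfl
  | theta m b => by
    by_cases hm : m ≤ j
    · simp [k, hm]
    · have hmi : ¬m ≤ i := fun h => hm (h.trans hij)
      simp [k, hm, hmi, k_k_of_ge hij b]

theorem k_k (i : ℕ) (b : TTerm) : k i (k i b) = k i b := k_k_of_le le_rfl b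

namespace Sub

theorem size_le {a b : TTerm} (h : Sub a b) : size a ≤ size b := by
  induction h with
  | zero => exact Nat.zero_le _
  | @coeff i _ b _ ih => exact ih.trans ((size_k_le i b).trans (Nat.le_succ _))
  | mono _ ih => exact Nat.succ_le_succ ih

theorem S_le {a b : TTerm} (h : Sub a b) : S a ≤ S b := by
  induction h with
  | zero => exact neg_one_le_S _
  | @coeff i _ b _ ih => exact ih.trans (S_k_le i b)
  | mono => exact le_rfl

theorem map_k (i : ℕ) {a b : TTerm} (h : Sub a b) : Sub (k i a) (k i b) := by
  induction h with
  | zero => exact Sub.zero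
  | @coeff j _ b _ ih =>
    by_cases hj : j ≤ i
    · rw [k_k_of_le hj] at ih
      simpa [k, hj] using Sub.coeff ih
    · rw [k_k_of_ge (by omega)] at ih
      simpa [k, hj] using ih
  | @mono j _ _ h ih =>
    by_cases hj : j ≤ i
    · simpa [k, hj] using Sub.mono h
    · simpa [k, hj] using ih

theorem k_of_theta {i : ℕ} {y c : TTerm} (h : Sub (theta i y) c) : Sub (k i y) c := by
  generalize hx : theta i y = x at h
  induction h with
  | zero => exact absurd hx theta_ne_zero
  | coeff _ ih => exact Sub.coeff (ih hx)
  | mono h =>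
    cases hx
    exact Sub.coeff (map_k i h)

theorem not_theta_k (i : ℕ) (b : TTerm) : ¬Sub (theta i b) (k i b) := fun h => by
  have := h.size_le.trans (size_k_le i b)
  simp [size] at this

end Sub

theorem Lt.trichotomy : ∀ a b : TTerm, Lt a b ∨ a = b ∨ Lt b a
  | .zero, .zero => Or.inr (Or.inl rfl)
  | .zero, theta _ _ => Or.inl (Lt.zero theta_ne_zero)
  | theta _ _, .zero => Or.inr (Or.inr (Lt.zero theta_ne_zero))
  | theta i a, theta j b => by
    rcases Nat.lt_trichotomy i j with hij | rfl | hji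
    · exact Or.inl (Lt.idx hij)
    · rcases Lt.trichotomy a b with hab | rfl | hba
      · rcases Lt.trichotomy (k i a) (theta i b) with h | h | h
        · exact Or.inl (Lt.left hab h)
        · exact Or.inr (Or.inr (Lt.right hab (h ▸ Le.refl)))
        · exact Or.inr (Or.inr (Lt.right hab (Le.of_lt h)))
      · exact Or.inr (Or.inl rfl)
      · rcases Lt.trichotomy (k i b) (theta i a) with h | h | h
        · exact Or.inr (Or.inr (Lt.left hba h))
        · exact Or.inl (Lt.right hba (h ▸ Le.refl))
        · exact Or.inl (Lt.right hba (Le.of_lt h))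
    · exact Or.inr (Or.inr (Lt.idx hji))
termination_by a b => size a + size b
decreasing_by
  all_goals have := size_k_le i a; have := size_k_le i b; simp only [size]; omega

theorem k_lt_theta_of_sub {i : ℕ} {b : TTerm} (hk : ∀ a, Sub a (k i b) → Le a (k i b)) :
    ∀ x, Sub (k i x) (k i b) → Lt (k i x) (theta i b)
  | zero, _ => Lt.zero theta_ne_zero
  | theta m y, hx => by
    rcases Nat.lt_trichotomy m i with hmi | rfl | hmi
    · simpa [k, hmi.le] using Lt.idx hmi
    · simp only [k, le_refl, if_true] at hx ⊢
      rcases Lt.trichotomy y b with hyb | rfl | hby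
      · exact Lt.left hyb (k_lt_theta_of_sub hk y hx.k_of_theta)
      · exact absurd hx (Sub.not_theta_k m y)
      · exact Lt.right hby (hk _ hx)
    · simpa [k, not_le.2 hmi] using k_lt_theta_of_sub hk y (by simpa [k, not_le.2 hmi] using hx)

theorem Sub.le {a b : TTerm} (h : Sub a b) : Le a b := by
  cases h with
  | @zero b =>
    cases b
    · exact Le.refl
    · exact Le.of_lt (Lt.zero theta_ne_zero)
  | @coeff i a b hab =>
    have hlt := k_lt_theta_of_sub (fun c hc => hc.le) a (by simpa [k_k] using hab.map_k i)
    rw [k_of_S_le (hab.S_le.trans (S_k_le i b))] at hlt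
    exact Le.of_lt hlt
  | @mono i a b hab =>
    rcases hab.le with _ | hlt
    · exact Le.refl
    · exact Le.of_lt (Lt.left hlt (k_lt_theta_of_sub (fun c hc => hc.le) a (hab.map_k i)))
termination_by size b
decreasing_by
  all_goals have := size_k_le i b; simp only [size]; omega

end TTerm

/-- The linear order `<` on `T` extends the tree-order `⊴`. -/
theorem stmt7 (α β : TTerm) (hα : TTerm.WF α) (hβ : TTerm.WF β)
    (h : TTerm.Sub α β) : TTerm.Le α β :=
  h.le
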